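/- Let z_r' = d/dz E_α^{−r}(z). For any compact [α₋,α₊] ⊂ (0,1) there is a constant C such that |(∂_α z_r')/z_r'| ≤ C·(max(1,log(r z^α)))²·(max(1,log r) − log z) for all α ∈ [α₋,α₊], z ∈ (0,1], r ≥ 1. -/

import Mathlib

/-!
Write `z_k = E_α^{-k}(z)` and `u_k = (2 z_k)^α`, so that `z_{k-1} = z_k (1 + u_k)`, and for `k ≥ 1`
also `z_k ≤ 1/2` and `u_k ≤ 1`. Then `u_{k-1} = u_k (1 + u_k)^α`, so `1 / u_k ≥ 1 / u_0 + α k / 4`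
and `∑_{k=1}^r u_k ≤ (4/α) log (1 + r z^α)`; also `-log (2 z_k) ≤ -log (2 z) + ∑_{j=1}^k u_j`.
By the implicit function theorem `z_r' = ∏_{k=1}^r 1 / ∂_t E_α(z_k)`, and differentiating the
recursion for `z_k` in `α` gives `|∂_α z_k| / z_k ≤ ∑_{j=1}^k u_j (-log (2 z_j))`. The `k`-th
factor of `z_r'` contributes at most `u_k (1 + 2 (-log (2 z_k)) + 2 |∂_α z_k| / z_k)` to
`|∂_α z_r' / z_r'|`, and the estimates above bound the total by
`C (max 1 (log (r z^α)))² (max 1 (log r) - log z)`.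
-/

/-- Left branch of the LSV (Pomeau–Manneville type) map. -/
noncomputable def Ea (α x : ℝ) : ℝ := x * (1 + 2 ^ α * x ^ α)

open Real Set Topology Filter

noncomputable def powTwoMul (a t : ℝ) : ℝ := exp (a * log (2 * t))

noncomputable def lsvMap (a t : ℝ) : ℝ := t * (1 + powTwoMul a t)

noncomputable def lsvMapDerivT (a t : ℝ) : ℝ := 1 + (1 + a) * powTwoMul a t

noncomputable def lsvMapDerivA (a t : ℝ) : ℝ := t * powTwoMul a t * log (2 * t)

lemma powTwoMul_pos (a t : ℝ) : 0 < powTwoMul a t := exp_pos _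

lemma Ea_eq_lsvMap (a : ℝ) {t : ℝ} (ht : 0 < t) : Ea a t = lsvMap a t := by
  rw [Ea, lsvMap, powTwoMul, rpow_def_of_pos two_pos, rpow_def_of_pos ht, ← exp_add,
    log_mul two_ne_zero ht.ne']
  ring_nf

lemma lsvMapDerivT_pos {a : ℝ} (ha : -1 ≤ a) (t : ℝ) : 0 < lsvMapDerivT a t := by
  have := powTwoMul_pos a t
  unfold lsvMapDerivT; nlinarith

lemma hasStrictFDerivAt_lsvMap (a : ℝ) {t : ℝ} (ht : 0 < t) :
    HasStrictFDerivAt (fun p : ℝ × ℝ => lsvMap p.1 p.2)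
      (lsvMapDerivA a t • ContinuousLinearMap.fst ℝ ℝ ℝ +
        lsvMapDerivT a t • ContinuousLinearMap.snd ℝ ℝ ℝ) (a, t) := by
  have hlog : HasStrictFDerivAt (fun p : ℝ × ℝ => log (2 * p.2))
      (t⁻¹ • ContinuousLinearMap.snd ℝ ℝ ℝ) (a, t) := by
    refine ((hasStrictDerivAt_log (by positivity : 2 * t ≠ 0)).comp_hasStrictFDerivAt (a, t)
      ((hasStrictFDerivAt_snd (𝕜 := ℝ)).const_mul 2)).congr_fderiv ?_
    ext <;> simp
  have hexp := (hasStrictDerivAt_exp _).comp_hasStrictFDerivAt (a, t)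
    ((hasStrictFDerivAt_fst (𝕜 := ℝ) (E := ℝ) (F := ℝ)).mul hlog)
  refine ((hasStrictFDerivAt_snd (𝕜 := ℝ)).mul (hexp.const_add 1)).congr_fderiv ?_
  ext
  · simp [lsvMapDerivA, powTwoMul, mul_assoc]
  · simp [lsvMapDerivT, powTwoMul, field, add_comm, add_assoc]

lemma strictMonoOn_lsvMap {a : ℝ} (ha : 0 < a) : StrictMonoOn (lsvMap a) (Ioi 0) := by
  intro s (hs : 0 < s) t _ hst
  have : powTwoMul a s < powTwoMul a t :=
    exp_lt_exp.2 (mul_lt_mul_of_pos_left (log_lt_log (by positivity) (by linarith)) ha)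
  unfold lsvMap
  nlinarith [powTwoMul_pos a s]

lemma continuousOn_lsvMap (a : ℝ) : ContinuousOn (lsvMap a) (Ioi 0) := by
  unfold lsvMap powTwoMul
  refine continuousOn_id.mul (continuousOn_const.add (ContinuousOn.rexp
    (continuousOn_const.mul (ContinuousOn.log (by fun_prop) fun t (ht : 0 < t) => ?_))))
  positivity

lemma lsvMap_half (a : ℝ) : lsvMap a (1 / 2) = 1 := by
  norm_num [lsvMap, powTwoMul]

lemma surjOn_lsvMap {a : ℝ} (ha : 0 < a) : SurjOn (lsvMap a) (Ioi 0) (Ioi 0) := by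
  intro y (hy : 0 < y)
  set s := min (y / 2) (1 / 4)
  set t := max y 1
  have hs : 0 < s := lt_min (by linarith) (by norm_num)
  have hst : s ≤ t := (min_le_right _ _).trans (by norm_num [t, le_max_right])
  have hs_le : lsvMap a s ≤ y := by
    have : powTwoMul a s ≤ 1 := exp_le_one_iff.2 (mul_nonpos_of_nonneg_of_nonpos ha.le
      (log_nonpos (by positivity) (by linarith [min_le_right (y / 2) (1 / 4)])))
    have : s ≤ y / 2 := min_le_left _ _
    unfold lsvMap; nlinarith
  have hy_le : y ≤ lsvMap a t := by
    have : 1 ≤ powTwoMul a t := one_le_exp (mul_nonneg ha.le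
      (log_nonneg (by linarith [le_max_right y 1])))
    have : y ≤ t := le_max_left _ _
    unfold lsvMap; nlinarith
  obtain ⟨x, hx, rfl⟩ := intermediate_value_Icc hst
    ((continuousOn_lsvMap a).mono fun x hx => hs.trans_le hx.1) ⟨hs_le, hy_le⟩
  exact ⟨x, hs.trans_le hx.1, rfl⟩

noncomputable def lsvInv (a : ℝ) : ℝ → ℝ := Function.invFunOn (lsvMap a) (Ioi 0)

lemma lsvInv_pos {a y : ℝ} (ha : 0 < a) (hy : 0 < y) : 0 < lsvInv a y :=
  Function.invFunOn_mem (surjOn_lsvMap ha hy)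

lemma lsvMap_lsvInv {a y : ℝ} (ha : 0 < a) (hy : 0 < y) : lsvMap a (lsvInv a y) = y :=
  Function.invFunOn_eq (surjOn_lsvMap ha hy)

lemma lsvInv_lsvMap {a t : ℝ} (ha : 0 < a) (ht : 0 < t) : lsvInv a (lsvMap a t) = t :=
  (strictMonoOn_lsvMap ha).injOn.leftInvOn_invFunOn ht

lemma lsvInv_le_half {a y : ℝ} (ha : 0 < a) (hy : 0 < y) (hy1 : y ≤ 1) : lsvInv a y ≤ 1 / 2 := by
  refine ((strictMonoOn_lsvMap ha).le_iff_le (lsvInv_pos ha hy) (by norm_num : (0 : ℝ) < 1 / 2)).1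
    ?_
  rwa [lsvMap_lsvInv ha hy, lsvMap_half]

noncomputable def shearEquiv (p q : ℝ) (hq : q ≠ 0) : (ℝ × ℝ) ≃L[ℝ] ℝ × ℝ :=
  .equivOfInverse
    ((ContinuousLinearMap.fst ℝ ℝ ℝ).prod (p • .fst ℝ ℝ ℝ + q • .snd ℝ ℝ ℝ))
    ((ContinuousLinearMap.fst ℝ ℝ ℝ).prod (q⁻¹ • (.snd ℝ ℝ ℝ - p • .fst ℝ ℝ ℝ)))
    (fun v => by ext <;> simp [field])
    (fun v => by ext <;> simp [field])

lemma hasStrictFDerivAt_lsvInv {a t : ℝ} (ha : 0 < a) (ht : 0 < t) :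
    HasStrictFDerivAt (fun p : ℝ × ℝ => (p.1, lsvInv p.1 p.2))
      ((shearEquiv (lsvMapDerivA a t) (lsvMapDerivT a t)
        (lsvMapDerivT_pos (by linarith) t).ne').symm : ℝ × ℝ →L[ℝ] ℝ × ℝ) (a, lsvMap a t) := by
  have hG : HasStrictFDerivAt (fun p : ℝ × ℝ => (p.1, lsvMap p.1 p.2))
      (shearEquiv (lsvMapDerivA a t) (lsvMapDerivT a t)
        (lsvMapDerivT_pos (by linarith) t).ne' : ℝ × ℝ →L[ℝ] ℝ × ℝ) (a, t) :=
    hasStrictFDerivAt_fst.prodMk (hasStrictFDerivAt_lsvMap a ht)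
  refine hG.to_local_left_inverse ?_
  filter_upwards [(isOpen_Ioi.prod isOpen_Ioi).mem_nhds (mk_mem_prod ha ht)] with p hp
  rw [lsvInv_lsvMap hp.1 hp.2]

lemma HasDerivAt.lsvInv {f g : ℝ → ℝ} {f' g' a t s : ℝ} (hf : HasDerivAt f f' s)
    (hg : HasDerivAt g g' s) (ha : 0 < a) (ht : 0 < t) (hfs : f s = a) (hgs : g s = lsvMap a t) :
    HasDerivAt (fun s => lsvInv (f s) (g s))
      ((g' - lsvMapDerivA a t * f') / lsvMapDerivT a t) s := by
  have hinv := (hasStrictFDerivAt_lsvInv ha ht).hasFDerivAt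
  rw [show (a, lsvMap a t) = (f s, g s) by rw [hfs, hgs]] at hinv
  have h := (hasFDerivAt_snd.comp _ hinv).comp_hasDerivAt s (hf.prodMk hg)
  refine h.congr_deriv ?_
  simp [shearEquiv, div_eq_inv_mul]

noncomputable def backOrbit : ℕ → ℝ → ℝ → ℝ
  | 0, _, x => x
  | r + 1, a, x => lsvInv a (backOrbit r a x)

noncomputable def backOrbitDerivX : ℕ → ℝ → ℝ → ℝ
  | 0, _, _ => 1
  | r + 1, a, x => backOrbitDerivX r a x / lsvMapDerivT a (backOrbit (r + 1) a x)

noncomputable def backOrbitDerivA : ℕ → ℝ → ℝ → ℝ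
  | 0, _, _ => 0
  | r + 1, a, x => (backOrbitDerivA r a x - lsvMapDerivA a (backOrbit (r + 1) a x)) /
      lsvMapDerivT a (backOrbit (r + 1) a x)

section backOrbit

variable {a x : ℝ}

lemma backOrbit_pos (ha : 0 < a) (hx : 0 < x) : ∀ r, 0 < backOrbit r a x
  | 0 => hx
  | r + 1 => lsvInv_pos ha (backOrbit_pos ha hx r)

lemma lsvMap_backOrbit_succ (ha : 0 < a) (hx : 0 < x) (r : ℕ) :
    lsvMap a (backOrbit (r + 1) a x) = backOrbit r a x :=
  lsvMap_lsvInv ha (backOrbit_pos ha hx r)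

lemma backOrbit_le_one (ha : 0 < a) (hx : 0 < x) (hx1 : x ≤ 1) : ∀ r, backOrbit r a x ≤ 1
  | 0 => hx1
  | r + 1 => (lsvInv_le_half ha (backOrbit_pos ha hx r) (backOrbit_le_one ha hx hx1 r)).trans
      (by norm_num)

lemma backOrbit_succ_le_half (ha : 0 < a) (hx : 0 < x) (hx1 : x ≤ 1) (r : ℕ) :
    backOrbit (r + 1) a x ≤ 1 / 2 :=
  lsvInv_le_half ha (backOrbit_pos ha hx r) (backOrbit_le_one ha hx hx1 r)

lemma hasDerivAt_backOrbit_x (ha : 0 < a) (hx : 0 < x) (r : ℕ) :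
    HasDerivAt (backOrbit r a) (backOrbitDerivX r a x) x := by
  induction r with
  | zero => exact hasDerivAt_id x
  | succ r ih =>
    exact ((hasDerivAt_const x a).lsvInv ih ha (backOrbit_pos ha hx (r + 1)) rfl
      (lsvMap_backOrbit_succ ha hx r).symm).congr_deriv (by simp [backOrbitDerivX])

lemma hasDerivAt_backOrbit_a (ha : 0 < a) (hx : 0 < x) (r : ℕ) :
    HasDerivAt (fun b => backOrbit r b x) (backOrbitDerivA r a x) a := by
  induction r with
  | zero => exact hasDerivAt_const a x
  | succ r ih =>
    exact ((hasDerivAt_id a).lsvInv ih ha (backOrbit_pos ha hx (r + 1)) rfl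
      (lsvMap_backOrbit_succ ha hx r).symm).congr_deriv (by simp [backOrbitDerivA])

lemma backOrbitDerivX_pos (ha : 0 ≤ a) : ∀ r, 0 < backOrbitDerivX r a x
  | 0 => one_pos
  | r + 1 => div_pos (backOrbitDerivX_pos ha r) (lsvMapDerivT_pos (by linarith) _)

lemma eq_backOrbit_of_Ea_eq {Z : ℕ → ℝ → ℝ → ℝ} (ha : 0 < a)
    (hZ0 : ∀ x ∈ Ioi (0 : ℝ), Z 0 a x = x)
    (hZ : ∀ r : ℕ, ∀ x ∈ Ioi (0 : ℝ), Ea a (Z (r + 1) a x) = Z r a x ∧ 0 < Z (r + 1) a x)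
    (r : ℕ) (hx : 0 < x) : Z r a x = backOrbit r a x := by
  induction r with
  | zero => exact hZ0 x hx
  | succ r ih =>
    obtain ⟨hEa, hpos⟩ := hZ r x hx
    rw [backOrbit, ← ih, ← hEa, Ea_eq_lsvMap a hpos, lsvInv_lsvMap ha hpos]

end backOrbit

noncomputable def orbitPow (k : ℕ) (a x : ℝ) : ℝ := powTwoMul a (backOrbit k a x)

noncomputable def orbitLog (k : ℕ) (a x : ℝ) : ℝ := -log (2 * backOrbit k a x)

lemma sum_inv_add_le_log {c : ℝ} (hc : 0 < c) (r : ℕ) :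
    ∑ k ∈ Finset.range r, (c + (k + 1))⁻¹ ≤ log (1 + r / c) := by
  have hstep : ∀ k : ℕ, (c + (k + 1))⁻¹ ≤ log (c + (k + 1 : ℕ)) - log (c + k) := by
    intro k
    have hk : 0 < c + k := by positivity
    have h := log_le_sub_one_of_pos (div_pos hk (by positivity : 0 < c + (k + 1)))
    rw [log_div hk.ne' (by positivity)] at h
    have : (c + k) / (c + (k + 1)) - 1 = -(c + (k + 1))⁻¹ := by field_simp; ring
    push_cast
    linarith
  calc ∑ k ∈ Finset.range r, (c + (k + 1))⁻¹
      ≤ ∑ k ∈ Finset.range r, (log (c + (k + 1 : ℕ)) - log (c + k)) :=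
        Finset.sum_le_sum fun k _ => hstep k
    _ = log (1 + r / c) := by
      rw [Finset.sum_range_sub (fun k : ℕ => log (c + k)), Nat.cast_zero, add_zero,
        ← log_div (by positivity) hc.ne']
      congr 1
      field_simp

lemma log_one_add_le_two_mul_max {y : ℝ} (hy : 0 ≤ y) : log (1 + y) ≤ 2 * max 1 (log y) := by
  rcases le_or_gt y 1 with h | h
  · have : log (1 + y) ≤ 1 + y - 1 := log_le_sub_one_of_pos (by positivity)
    linarith [le_max_left 1 (log y)]
  · have h2y : log (1 + y) ≤ log 2 + log y := by
      rw [← log_mul two_ne_zero (by positivity)]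
      exact log_le_log (by positivity) (by linarith)
    have : log 2 ≤ 1 := by linarith [log_two_lt_d9]
    linarith [le_max_left 1 (log y), le_max_right 1 (log y)]

section orbitPow

variable {a x : ℝ}

lemma orbitPow_pos (k : ℕ) (a x : ℝ) : 0 < orbitPow k a x := powTwoMul_pos _ _

lemma backOrbit_eq_mul (ha : 0 < a) (hx : 0 < x) (k : ℕ) :
    backOrbit k a x = backOrbit (k + 1) a x * (1 + orbitPow (k + 1) a x) :=
  (lsvMap_backOrbit_succ ha hx k).symm

lemma orbitLog_succ_eq (ha : 0 < a) (hx : 0 < x) (k : ℕ) :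
    orbitLog (k + 1) a x = orbitLog k a x + log (1 + orbitPow (k + 1) a x) := by
  have := backOrbit_pos ha hx (k + 1)
  have h2 : 2 * backOrbit k a x = 2 * backOrbit (k + 1) a x * (1 + orbitPow (k + 1) a x) := by
    rw [backOrbit_eq_mul ha hx k]; ring
  rw [orbitLog, orbitLog, h2, log_mul (x := 2 * backOrbit (k + 1) a x) (by positivity)
    (by linarith [orbitPow_pos (k + 1) a x])]
  ring

lemma orbitLog_le (ha : 0 < a) (hx : 0 < x) (k : ℕ) :
    orbitLog k a x ≤ orbitLog 0 a x + ∑ j ∈ Finset.range k, orbitPow (j + 1) a x := by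
  induction k with
  | zero => simp
  | succ k ih =>
    have := log_le_sub_one_of_pos (by linarith [orbitPow_pos (k + 1) a x] :
      0 < 1 + orbitPow (k + 1) a x)
    rw [orbitLog_succ_eq ha hx k, Finset.sum_range_succ]
    linarith

lemma orbitLog_succ_nonneg (ha : 0 < a) (hx : 0 < x) (hx1 : x ≤ 1) (k : ℕ) :
    0 ≤ orbitLog (k + 1) a x :=
  neg_nonneg.2 (log_nonpos (by linarith [backOrbit_pos ha hx (k + 1)])
    (by linarith [backOrbit_succ_le_half ha hx hx1 k]))

lemma orbitPow_succ_le_one (ha : 0 < a) (hx : 0 < x) (hx1 : x ≤ 1) (k : ℕ) :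
    orbitPow (k + 1) a x ≤ 1 := by
  have := orbitLog_succ_nonneg ha hx hx1 k
  rw [orbitLog] at this
  exact exp_le_one_iff.2 (by nlinarith)

lemma orbitPow_eq_mul_exp (ha : 0 < a) (hx : 0 < x) (k : ℕ) :
    orbitPow k a x = orbitPow (k + 1) a x * exp (a * log (1 + orbitPow (k + 1) a x)) := by
  have h := orbitLog_succ_eq ha hx k
  rw [orbitLog, orbitLog] at h
  show exp _ = exp (a * log (2 * backOrbit (k + 1) a x)) * _
  rw [← exp_add]
  congr 1
  linear_combination a * h

lemma inv_orbitPow_add_le (ha₀ : 0 < a) (ha₁ : a ≤ 1) (hx : 0 < x) (hx1 : x ≤ 1) (k : ℕ) :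
    (orbitPow k a x)⁻¹ + a / 4 ≤ (orbitPow (k + 1) a x)⁻¹ := by
  set u := orbitPow (k + 1) a x
  set E := exp (a * log (1 + u))
  have hu : 0 < u := orbitPow_pos _ _ _
  have hu1 : u ≤ 1 := orbitPow_succ_le_one ha₀ hx hx1 k
  have hE_ge : 1 + a * u / 2 ≤ E := by
    have hlog : u / 2 ≤ log (1 + u) := by
      have := log_le_sub_one_of_pos (inv_pos.2 (by linarith : 0 < 1 + u))
      rw [log_inv] at this
      have : 1 - (1 + u)⁻¹ = u / (1 + u) := by field_simp; ring
      have : u / 2 ≤ u / (1 + u) := div_le_div_of_nonneg_left hu.le (by linarith) (by linarith)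
      linarith
    nlinarith [add_one_le_exp (a * log (1 + u))]
  have hE_le : E ≤ 2 := by
    calc E ≤ exp (log 2) := exp_le_exp.2 (by
          nlinarith [log_le_log (by linarith) (by linarith : 1 + u ≤ 2),
            log_nonneg (by linarith : (1 : ℝ) ≤ 1 + u)])
      _ = 2 := exp_log two_pos
  have hE : 0 < E := exp_pos _
  rw [orbitPow_eq_mul_exp ha₀ hx k]
  calc (u * E)⁻¹ + a / 4 = (1 + a * u * E / 4) / (u * E) := by field_simp
    _ ≤ E / (u * E) := by
      gcongr
      nlinarith [mul_nonneg (mul_nonneg ha₀.le hu.le) (sub_nonneg.2 hE_le)]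
    _ = u⁻¹ := by field_simp

lemma inv_orbitPow_ge (ha₀ : 0 < a) (ha₁ : a ≤ 1) (hx : 0 < x) (hx1 : x ≤ 1) (k : ℕ) :
    (orbitPow 0 a x)⁻¹ + k * (a / 4) ≤ (orbitPow k a x)⁻¹ := by
  induction k with
  | zero => simp
  | succ k ih =>
    push_cast
    linarith [inv_orbitPow_add_le ha₀ ha₁ hx hx1 k]

lemma sum_orbitPow_le (ha₀ : 0 < a) (ha₁ : a ≤ 1) (hx : 0 < x) (hx1 : x ≤ 1) (r : ℕ) :
    ∑ k ∈ Finset.range r, orbitPow (k + 1) a x ≤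
      4 / a * log (1 + r * (a / 4 * orbitPow 0 a x)) := by
  set c := 4 / (a * orbitPow 0 a x)
  have hu0 := orbitPow_pos 0 a x
  have hc : 0 < c := by positivity
  have hterm : ∀ k : ℕ, orbitPow (k + 1) a x ≤ 4 / a * (c + (k + 1))⁻¹ := by
    intro k
    have h := inv_orbitPow_ge ha₀ ha₁ hx hx1 (k + 1)
    rw [show 4 / a * (c + (k + 1))⁻¹ = ((orbitPow 0 a x)⁻¹ + ((k + 1 : ℕ) : ℝ) * (a / 4))⁻¹ by
      simp only [c]; push_cast; field_simp]
    rw [← inv_inv (orbitPow (k + 1) a x)]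
    exact inv_anti₀ (by positivity) h
  calc ∑ k ∈ Finset.range r, orbitPow (k + 1) a x
      ≤ ∑ k ∈ Finset.range r, 4 / a * (c + (k + 1))⁻¹ := Finset.sum_le_sum fun k _ => hterm k
    _ = 4 / a * ∑ k ∈ Finset.range r, (c + (k + 1))⁻¹ := by rw [Finset.mul_sum]
    _ ≤ 4 / a * log (1 + r / c) := by gcongr; exact sum_inv_add_le_log hc r
    _ = 4 / a * log (1 + r * (a / 4 * orbitPow 0 a x)) := by simp only [c]; field_simp

end orbitPow

lemma hasDerivAt_lsvMapDerivT_comp {f : ℝ → ℝ} {f' a : ℝ} (hf : HasDerivAt f f' a)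
    (hfa : 0 < f a) :
    HasDerivAt (fun b => lsvMapDerivT b (f b))
      (powTwoMul a (f a) * (1 + (1 + a) * (log (2 * f a) + a * (f' / f a)))) a := by
  have hexp := ((hasDerivAt_id a).mul ((hf.const_mul 2).log (by positivity))).exp
  refine ((((hasDerivAt_id a).const_add 1).mul hexp).const_add 1).congr_deriv ?_
  simp only [powTwoMul, id, Pi.mul_apply]
  field_simp

lemma abs_one_add_mul_neg_add_le {a l q : ℝ} (ha₀ : 0 ≤ a) (ha₁ : a ≤ 1) (hl : 0 ≤ l) :
    |1 + (1 + a) * (-l + a * q)| ≤ 1 + 2 * l + 2 * |q| := by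
  have hinner : |-l + a * q| ≤ l + |q| := by
    calc |-l + a * q| ≤ |-l| + |a * q| := abs_add_le _ _
      _ = l + a * |q| := by rw [abs_neg, abs_of_nonneg hl, abs_mul, abs_of_nonneg ha₀]
      _ ≤ l + |q| := by gcongr; exact mul_le_of_le_one_left (abs_nonneg q) ha₁
  calc |1 + (1 + a) * (-l + a * q)| ≤ |1| + |(1 + a) * (-l + a * q)| := abs_add_le _ _
    _ = 1 + (1 + a) * |-l + a * q| := by rw [abs_one, abs_mul, abs_of_nonneg (by linarith)]
    _ ≤ 1 + 2 * (l + |q|) := by gcongr; linarith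
    _ = 1 + 2 * l + 2 * |q| := by ring

section derivBounds

variable {a x : ℝ}

lemma abs_backOrbitDerivA_div_le (ha : 0 < a) (hx : 0 < x) (hx1 : x ≤ 1) (k : ℕ) :
    |backOrbitDerivA k a x| / backOrbit k a x ≤
      ∑ j ∈ Finset.range k, orbitPow (j + 1) a x * orbitLog (j + 1) a x := by
  induction k with
  | zero => simp [backOrbitDerivA]
  | succ k ih =>
    set z := backOrbit (k + 1) a x
    set u := orbitPow (k + 1) a x
    set L := orbitLog (k + 1) a x
    set S := ∑ j ∈ Finset.range k, orbitPow (j + 1) a x * orbitLog (j + 1) a x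
    have hz : 0 < z := backOrbit_pos ha hx (k + 1)
    have hu : 0 < u := orbitPow_pos _ _ _
    have hL : 0 ≤ L := orbitLog_succ_nonneg ha hx hx1 k
    have hD : 1 + u ≤ lsvMapDerivT a z := by
      change 1 + u ≤ 1 + (1 + a) * u
      nlinarith
    have hA : |backOrbitDerivA (k + 1) a x| ≤ (|backOrbitDerivA k a x| + z * u * L) / (1 + u) := by
      have hDA : lsvMapDerivA a z = -(z * u * L) := by
        simp only [lsvMapDerivA, L, u, orbitPow, orbitLog, z]; ring
      rw [backOrbitDerivA, hDA, sub_neg_eq_add, abs_div,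
        abs_of_pos (lsvMapDerivT_pos (by linarith) _)]
      refine div_le_div₀ (by positivity) ((abs_add_le _ _).trans ?_) (by positivity) hD
      rw [abs_of_nonneg (by positivity : 0 ≤ z * u * L)]
    rw [backOrbit_eq_mul ha hx k, div_le_iff₀ (by positivity)] at ih
    rw [Finset.sum_range_succ, div_le_iff₀ hz]
    calc |backOrbitDerivA (k + 1) a x| ≤ (|backOrbitDerivA k a x| + z * u * L) / (1 + u) := hA
      _ ≤ (S * (z * (1 + u)) + z * u * L) / (1 + u) := by gcongr
      _ ≤ (S + u * L) * z := by
        rw [div_le_iff₀ (by positivity)]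
        nlinarith [mul_nonneg (mul_nonneg hz.le (mul_nonneg hu.le hL)) hu.le]

lemma exists_hasDerivAt_backOrbitDerivX (ha₀ : 0 < a) (ha₁ : a ≤ 1) (hx : 0 < x) (hx1 : x ≤ 1)
    (r : ℕ) :
    ∃ T, HasDerivAt (fun b => backOrbitDerivX r b x) (backOrbitDerivX r a x * T) a ∧
      |T| ≤ ∑ k ∈ Finset.range r, orbitPow (k + 1) a x * (1 + 2 * orbitLog (k + 1) a x +
        2 * (|backOrbitDerivA (k + 1) a x| / backOrbit (k + 1) a x)) := by
  induction r with
  | zero => exact ⟨0, by simpa [backOrbitDerivX] using hasDerivAt_const a (1 : ℝ), by simp⟩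
  | succ r ih =>
    obtain ⟨T, hT, hTle⟩ := ih
    set z := backOrbit (r + 1) a x
    set u := orbitPow (r + 1) a x
    set q := backOrbitDerivA (r + 1) a x / z
    set D := lsvMapDerivT a z
    set D' := u * (1 + (1 + a) * (log (2 * z) + a * q))
    have hz : 0 < z := backOrbit_pos ha₀ hx (r + 1)
    have hu : 0 < u := orbitPow_pos _ _ _
    have hD : 1 ≤ D := by
      change 1 ≤ 1 + (1 + a) * u
      nlinarith
    have hderivD : HasDerivAt (fun b => lsvMapDerivT b (backOrbit (r + 1) b x)) D' a :=
      hasDerivAt_lsvMapDerivT_comp (hasDerivAt_backOrbit_a ha₀ hx (r + 1)) hz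
    have hD' : |D'| ≤
        u * (1 + 2 * orbitLog (r + 1) a x + 2 * (|backOrbitDerivA (r + 1) a x| / z)) := by
      have hlog : log (2 * z) = -orbitLog (r + 1) a x := (neg_neg _).symm
      have hq : |q| = |backOrbitDerivA (r + 1) a x| / z := by rw [abs_div, abs_of_pos hz]
      simp only [D', hlog]
      rw [abs_mul, abs_of_pos hu, ← hq]
      gcongr
      exact abs_one_add_mul_neg_add_le ha₀.le ha₁ (orbitLog_succ_nonneg ha₀ hx hx1 r)
    refine ⟨T - D' / D, (hT.div hderivD (by positivity)).congr_deriv ?_, ?_⟩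
    · have : D ≠ 0 := by positivity
      simp only [backOrbitDerivX, show lsvMapDerivT a (backOrbit (r + 1) a x) = D from rfl]
      field_simp
    · rw [Finset.sum_range_succ]
      have hdiv : |D' / D| ≤ |D'| := by
        rw [abs_div, abs_of_pos (by linarith : 0 < D)]
        exact div_le_self (abs_nonneg _) hD
      linarith [abs_sub T (D' / D)]

lemma exists_hasDerivAt_backOrbitDerivX_le (ha₀ : 0 < a) (ha₁ : a ≤ 1) (hx : 0 < x) (hx1 : x ≤ 1)
    {r : ℕ} {S Q : ℝ} (hS : ∑ k ∈ Finset.range r, orbitPow (k + 1) a x ≤ S) (hQ : -log x + S ≤ Q) :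
    ∃ T, HasDerivAt (fun b => backOrbitDerivX r b x) (backOrbitDerivX r a x * T) a ∧
      |T| ≤ S * (1 + 2 * Q + 2 * (Q * S)) := by
  obtain ⟨T, hT, hTle⟩ := exists_hasDerivAt_backOrbitDerivX ha₀ ha₁ hx hx1 r
  refine ⟨T, hT, hTle.trans ?_⟩
  have hpartial : ∀ {f : ℕ → ℝ} {k : ℕ}, (∀ j, 0 ≤ f j) → k ≤ r →
      ∑ j ∈ Finset.range k, f j ≤ ∑ j ∈ Finset.range r, f j := fun hf hk =>
    Finset.sum_le_sum_of_subset_of_nonneg (Finset.range_subset_range.2 hk) fun j _ _ => hf j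
  have hu : ∀ j, 0 ≤ orbitPow (j + 1) a x := fun j => (orbitPow_pos _ _ _).le
  have hL : ∀ k < r, orbitLog (k + 1) a x ≤ Q := by
    intro k hk
    have h0 : orbitLog 0 a x ≤ -log x := by
      rw [orbitLog, backOrbit, log_mul two_ne_zero hx.ne']
      linarith [log_pos one_lt_two]
    linarith [orbitLog_le ha₀ hx (k + 1), hpartial hu hk]
  have hS0 : 0 ≤ S := (Finset.sum_nonneg fun j _ => hu j).trans hS
  have hQ0 : 0 ≤ Q := by linarith [neg_nonneg.2 (log_nonpos hx.le hx1)]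
  have hA : ∀ k < r, |backOrbitDerivA (k + 1) a x| / backOrbit (k + 1) a x ≤ Q * S := by
    intro k hk
    refine (abs_backOrbitDerivA_div_le ha₀ hx hx1 (k + 1)).trans ((hpartial (fun j =>
      mul_nonneg (hu j) (orbitLog_succ_nonneg ha₀ hx hx1 j)) hk).trans ?_)
    calc _ ≤ ∑ j ∈ Finset.range r, orbitPow (j + 1) a x * Q :=
          Finset.sum_le_sum fun j hj =>
            mul_le_mul_of_nonneg_left (hL j (Finset.mem_range.1 hj)) (hu j)
      _ ≤ Q * S := by rw [← Finset.sum_mul, mul_comm]; gcongr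
  calc _ ≤ ∑ k ∈ Finset.range r, orbitPow (k + 1) a x * (1 + 2 * Q + 2 * (Q * S)) :=
        Finset.sum_le_sum fun k hk => mul_le_mul_of_nonneg_left (by
          linarith [hL k (Finset.mem_range.1 hk), hA k (Finset.mem_range.1 hk)]) (hu k)
    _ ≤ S * (1 + 2 * Q + 2 * (Q * S)) := by rw [← Finset.sum_mul]; gcongr

end derivBounds

lemma orbitPow_zero_le {a x : ℝ} (ha₁ : a ≤ 1) (hx : 0 < x) : orbitPow 0 a x ≤ 2 * x ^ a := by
  have h2 : (2 : ℝ) ^ a ≤ 2 := by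
    simpa using rpow_le_rpow_of_exponent_le one_le_two ha₁
  rw [orbitPow, powTwoMul, backOrbit, mul_comm, ← rpow_def_of_pos (by positivity),
    mul_rpow zero_le_two hx.le]
  gcongr

lemma sum_orbitPow_le_mul_max_log {a x : ℝ} (ha₀ : 0 < a) (ha₁ : a ≤ 1) (hx : 0 < x)
    (hx1 : x ≤ 1) (r : ℕ) :
    ∑ k ∈ Finset.range r, orbitPow (k + 1) a x ≤ 8 / a * max 1 (log (r * x ^ a)) := by
  have hu0 := orbitPow_zero_le ha₁ hx
  have hxa : 0 < x ^ a := rpow_pos_of_pos hx a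
  calc _ ≤ 4 / a * log (1 + r * (a / 4 * orbitPow 0 a x)) := sum_orbitPow_le ha₀ ha₁ hx hx1 r
    _ ≤ 4 / a * log (1 + r * x ^ a) := by
      gcongr
      · have := orbitPow_pos 0 a x; positivity
      · nlinarith
    _ ≤ 4 / a * (2 * max 1 (log (r * x ^ a))) := by
      gcongr; exact log_one_add_le_two_mul_max (by positivity)
    _ = 8 / a * max 1 (log (r * x ^ a)) := by ring

lemma exists_hasDerivAt_backOrbitDerivX_le_max_log {a x c : ℝ} (ha₀ : 0 < a) (ha₁ : a ≤ 1)
    (hx : 0 < x) (hx1 : x ≤ 1) (hc : 8 / a ≤ c) (r : ℕ) :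
    ∃ T, HasDerivAt (fun b => backOrbitDerivX r b x) (backOrbitDerivX r a x * T) a ∧
      |T| ≤ 3 * c * (1 + c) ^ 2 * max 1 (log (r * x ^ a)) ^ 2 * (max 1 (log r) - log x) := by
  set M := max 1 (log (r * x ^ a))
  set Λ := max 1 (log r) - log x
  have hc0 : 0 ≤ c := le_trans (by positivity) hc
  have hlogx : log x ≤ 0 := log_nonpos hx.le hx1
  have hM : 1 ≤ M := le_max_left _ _
  have hMΛ : M ≤ Λ := by
    have hlog : log (r * x ^ a) ≤ log r := by
      rcases r.eq_zero_or_pos with rfl | hr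
      · simp
      · exact log_le_log (by positivity) (mul_le_of_le_one_right (by positivity)
          (rpow_le_one hx.le hx1 ha₀.le))
    exact max_le (by linarith [le_max_left 1 (log r)]) (by linarith [le_max_right 1 (log r)])
  have hS : ∑ k ∈ Finset.range r, orbitPow (k + 1) a x ≤ c * M :=
    (sum_orbitPow_le_mul_max_log ha₀ ha₁ hx hx1 r).trans (by gcongr)
  have hQ : -log x + c * M ≤ (1 + c) * Λ := by
    nlinarith [le_max_left 1 (log r), mul_le_mul_of_nonneg_left hMΛ hc0]
  obtain ⟨T, hT, hTle⟩ := exists_hasDerivAt_backOrbitDerivX_le ha₀ ha₁ hx hx1 hS hQ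
  refine ⟨T, hT, hTle.trans ?_⟩
  have hΛ : 1 ≤ Λ := hM.trans hMΛ
  have hMΛ' : M * Λ ≤ M ^ 2 * Λ := mul_le_mul_of_nonneg_right (by nlinarith) (by linarith)
  have hM' : M ≤ M ^ 2 * Λ := by nlinarith
  have hM2Λ : 0 ≤ M ^ 2 * Λ := by nlinarith
  have hc2 : 0 ≤ c * (1 + c) := by positivity
  have hc3 : 0 ≤ c ^ 2 * (1 + c) := by positivity
  nlinarith [mul_le_mul_of_nonneg_left hM' hc0, mul_le_mul_of_nonneg_left hMΛ' hc2,
    mul_nonneg hc3 hM2Λ, mul_nonneg hc2 hM2Λ]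

theorem stmt13_general (αm αp : ℝ) (h1 : 0 < αm) (h3 : αp < 1) :
    ∃ C : ℝ, 0 < C ∧
      ∀ Z : ℕ → ℝ → ℝ → ℝ,
        (∀ a ∈ Set.Ioo (0:ℝ) 1, ∀ x ∈ Set.Ioi (0:ℝ), Z 0 a x = x) →
        (∀ a ∈ Set.Ioo (0:ℝ) 1, ∀ r : ℕ, ∀ x ∈ Set.Ioi (0:ℝ),
          Ea a (Z (r + 1) a x) = Z r a x ∧ 0 < Z (r + 1) a x) →
        (∀ a ∈ Set.Ioo (0:ℝ) 1, ∀ r : ℕ, ∀ x ∈ Set.Ioc (0:ℝ) 1, Z (r + 1) a x ≤ 1/2) →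
        ∀ α ∈ Set.Icc αm αp, ∀ z ∈ Set.Ioc (0:ℝ) 1, ∀ r : ℕ, 1 ≤ r →
          |deriv (fun a => deriv (fun x => Z r a x) z) α / deriv (fun x => Z r α x) z| ≤
            C * (max 1 (Real.log (r * z ^ α))) ^ 2 * (max 1 (Real.log r) - Real.log z) := by
  refine ⟨3 * (8 / αm) * (1 + 8 / αm) ^ 2, by positivity, ?_⟩
  intro Z hZ0 hZ _ α hα z hz r _
  have hα' : α ∈ Ioo (0 : ℝ) 1 := ⟨h1.trans_le hα.1, hα.2.trans_lt h3⟩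
  have hderiv_x : ∀ a ∈ Ioo (0 : ℝ) 1, deriv (fun x => Z r a x) z = backOrbitDerivX r a z := by
    intro a ha
    have hZ_eq : (fun x => Z r a x) =ᶠ[𝓝 z] backOrbit r a := by
      filter_upwards [Ioi_mem_nhds hz.1] with x hx
      exact eq_backOrbit_of_Ea_eq ha.1 (hZ0 a ha) (hZ a ha) r hx
    rw [hZ_eq.deriv_eq, (hasDerivAt_backOrbit_x ha.1 hz.1 r).deriv]
  obtain ⟨T, hT, hTle⟩ := exists_hasDerivAt_backOrbitDerivX_le_max_log hα'.1 hα'.2.le hz.1 hz.2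
    (div_le_div_of_nonneg_left (by norm_num) h1 hα.1) r
  have hderiv_a : deriv (fun a => deriv (fun x => Z r a x) z) α = backOrbitDerivX r α z * T := by
    have hZ_eq : (fun a => deriv (fun x => Z r a x) z) =ᶠ[𝓝 α] fun a => backOrbitDerivX r a z :=
      eventually_of_mem (Ioo_mem_nhds hα'.1 hα'.2) hderiv_x
    rw [hZ_eq.deriv_eq, hT.deriv]
  rw [hderiv_a, hderiv_x α hα', mul_div_cancel_left₀ _ (backOrbitDerivX_pos hα'.1.le r).ne']
  exact hTle

theorem stmt13 (αm αp : ℝ) (h1 : 0 < αm) (h2 : αm ≤ αp) (h3 : αp < 1) :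
    ∃ C : ℝ, 0 < C ∧
      ∀ Z : ℕ → ℝ → ℝ → ℝ,
        (∀ a ∈ Set.Ioo (0:ℝ) 1, ∀ x ∈ Set.Ioi (0:ℝ), Z 0 a x = x) →
        (∀ a ∈ Set.Ioo (0:ℝ) 1, ∀ r : ℕ, ∀ x ∈ Set.Ioi (0:ℝ),
          Ea a (Z (r + 1) a x) = Z r a x ∧ 0 < Z (r + 1) a x) →
        (∀ a ∈ Set.Ioo (0:ℝ) 1, ∀ r : ℕ, ∀ x ∈ Set.Ioc (0:ℝ) 1, Z (r + 1) a x ≤ 1/2) →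
        ∀ α ∈ Set.Icc αm αp, ∀ z ∈ Set.Ioc (0:ℝ) 1, ∀ r : ℕ, 1 ≤ r →
          |deriv (fun a => deriv (fun x => Z r a x) z) α / deriv (fun x => Z r α x) z| ≤
            C * (max 1 (Real.log (r * z ^ α))) ^ 2 * (max 1 (Real.log r) - Real.log z) :=
  stmt13_general αm αp h1 h3
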